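/- Let {h̄^(k)}_{k≥1} be positive and satisfy h̄^(k+1) - p h̄^(k) = Σ_{j=1}^J s_j max_{q ∈ [max(1,k-M), k]} (h̄^(q))^{η_j} for all k ≥ 1, with 0 < p < 1, s_j ≥ 0, η_j > 1, and suppose h̄^(k+1) ≤ δ^⌈k/M⌉ (b h̄^(1)) for all k ≥ 1 for some δ ∈ (0,1), b ≥ 1. Then lim_{k→∞} h̄^(k+1)/h̄^(k) = p. -/

import Mathlib

/- The increments of the recursion are nonnegative, so `h (k + 1) ≥ p h k`; hence every term
in the window `[k - M, k]` is at most `h k / p ^ M`, and dividing the recursion by `h k` gives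
`p ≤ h (k + 1) / h k ≤ p + ∑ j, s j (h k) ^ (η j - 1) / (p ^ M) ^ η j`.
The bound `δ ^ ⌈k / M⌉` forces `h k → 0`, and since every `η j - 1 > 0` the upper bound
tends to `p`. -/

open Filter

/-- Maximum of `g` over the integer index range `[a, b]`. -/
noncomputable def seqMax (g : ℕ → ℝ) (a b : ℕ) : ℝ := sSup (g '' Set.Icc a b)

open Topology

lemma le_seqMax (g : ℕ → ℝ) {a b q : ℕ} (hq : q ∈ Set.Icc a b) : g q ≤ seqMax g a b :=
  le_csSup ((Set.finite_Icc a b).image g).bddAbove (Set.mem_image_of_mem g hq)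

lemma seqMax_le {g : ℕ → ℝ} {a b : ℕ} {x : ℝ} (hab : a ≤ b)
    (h : ∀ q ∈ Set.Icc a b, g q ≤ x) : seqMax g a b ≤ x :=
  csSup_le ((Set.nonempty_Icc.2 hab).image g) (by rintro _ ⟨q, hq, rfl⟩; exact h q hq)

lemma mem_window {k : ℕ} (M : ℕ) (hk : 1 ≤ k) : k ∈ Set.Icc (max 1 (k - M)) k :=
  ⟨max_le hk (Nat.sub_le _ _), le_rfl⟩

section GeometricLowerBound

variable {h : ℕ → ℝ} {p : ℝ}

lemma pow_mul_le_of_mul_le_succ (hp : 0 ≤ p) (hstep : ∀ k, 1 ≤ k → p * h k ≤ h (k + 1))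
    {k : ℕ} (hk : 1 ≤ k) (d : ℕ) : p ^ d * h k ≤ h (k + d) := by
  induction d with
  | zero => simp
  | succ d ih =>
    calc p ^ (d + 1) * h k = p * (p ^ d * h k) := by ring
      _ ≤ p * h (k + d) := mul_le_mul_of_nonneg_left ih hp
      _ ≤ h (k + d + 1) := hstep (k + d) (by omega)

lemma le_div_pow_of_mem_window (hp : 0 < p) (hp1 : p ≤ 1) (hnonneg : ∀ k, 1 ≤ k → 0 ≤ h k)
    (hstep : ∀ k, 1 ≤ k → p * h k ≤ h (k + 1)) {k M q : ℕ}
    (hq : q ∈ Set.Icc (max 1 (k - M)) k) : h q ≤ h k / p ^ M := by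
  obtain ⟨hq1, hqk⟩ := hq
  have hq1' : 1 ≤ q := le_of_max_le_left hq1
  have hkq : p ^ (k - q) * h q ≤ h k := by
    simpa [Nat.add_sub_cancel' hqk] using pow_mul_le_of_mul_le_succ hp.le hstep hq1' (k - q)
  have hpow : p ^ M ≤ p ^ (k - q) := pow_le_pow_of_le_one hp.le hp1 (by omega)
  rw [le_div_iff₀ (pow_pos hp M), mul_comm]
  exact (mul_le_mul_of_nonneg_right hpow (hnonneg q hq1')).trans hkq

lemma seqMax_rpow_le (hp : 0 < p) (hp1 : p ≤ 1) (hnonneg : ∀ k, 1 ≤ k → 0 ≤ h k)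
    (hstep : ∀ k, 1 ≤ k → p * h k ≤ h (k + 1)) {η : ℝ} (hη : 0 ≤ η) {k : ℕ} (M : ℕ)
    (hk : 1 ≤ k) :
    seqMax (fun q => h q ^ η) (max 1 (k - M)) k ≤ (h k / p ^ M) ^ η :=
  seqMax_le (mem_window M hk).1 fun q hq =>
    Real.rpow_le_rpow (hnonneg q (le_of_max_le_left hq.1))
      (le_div_pow_of_mem_window hp hp1 hnonneg hstep hq) hη

end GeometricLowerBound

lemma tendsto_zero_of_le_pow_div {h : ℕ → ℝ} {δ C : ℝ} {M : ℕ} (hM : 1 ≤ M)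
    (hδ : 0 ≤ δ) (hδ1 : δ < 1) (hnonneg : ∀ k, 1 ≤ k → 0 ≤ h k)
    (hbound : ∀ k, 1 ≤ k → h (k + 1) ≤ δ ^ ((k + M - 1) / M) * C) :
    Tendsto h atTop (𝓝 0) := by
  have hexp : Tendsto (fun k : ℕ => (k + M - 1) / M) atTop atTop :=
    (Nat.tendsto_div_const_atTop (by omega)).comp
      (tendsto_atTop_mono (fun k => show k ≤ k + M - 1 by omega) tendsto_id)
  have hub : Tendsto (fun k : ℕ => δ ^ ((k + M - 1) / M) * C) atTop (𝓝 0) := by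
    simpa using ((tendsto_pow_atTop_nhds_zero_of_lt_one hδ hδ1).comp hexp).mul_const C
  refine (tendsto_add_atTop_iff_nat 1).1 (tendsto_of_tendsto_of_tendsto_of_le_of_le'
    tendsto_const_nhds hub ?_ ?_) <;> filter_upwards [eventually_ge_atTop 1] with k hk
  · exact hnonneg (k + 1) (by omega)
  · exact hbound k hk

lemma tendsto_sum_mul_rpow_nhds_zero {α ι : Type*} {l : Filter α} {x : α → ℝ}
    (hx : Tendsto x l (𝓝 0)) (t : Finset ι) (c e : ι → ℝ) (he : ∀ j ∈ t, 0 < e j) :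
    Tendsto (fun a => ∑ j ∈ t, c j * x a ^ e j) l (𝓝 0) := by
  have hterm : ∀ j ∈ t, Tendsto (fun a => c j * x a ^ e j) l (𝓝 0) := fun j hj => by
    simpa [Real.zero_rpow (he j hj).ne'] using
      (hx.rpow_const (Or.inr (he j hj).le)).const_mul (c j)
  simpa using tendsto_finsetSum t hterm

section Recursion

variable {h : ℕ → ℝ} {p : ℝ} {J M : ℕ} {s η : ℕ → ℝ}

lemma mul_le_succ_of_rec (hnonneg : ∀ k, 1 ≤ k → 0 ≤ h k) (hs : ∀ j, j < J → 0 ≤ s j)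
    (hrec : ∀ k, 1 ≤ k → h (k + 1) - p * h k = ∑ j ∈ Finset.range J,
      s j * seqMax (fun q => h q ^ η j) (max 1 (k - M)) k)
    (k : ℕ) (hk : 1 ≤ k) : p * h k ≤ h (k + 1) := by
  have hinc : 0 ≤ h (k + 1) - p * h k := by
    rw [hrec k hk]
    refine Finset.sum_nonneg fun j hj => mul_nonneg (hs j (Finset.mem_range.1 hj)) ?_
    exact (Real.rpow_nonneg (hnonneg k hk) _).trans 
      (le_seqMax (fun q => h q ^ η j) (mem_window M hk))
  linarith

lemma div_le_add_sum_of_rec (hp : 0 < p) (hp1 : p ≤ 1) (hpos : ∀ k, 1 ≤ k → 0 < h k)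
    (hs : ∀ j, j < J → 0 ≤ s j) (hη : ∀ j, j < J → 0 ≤ η j)
    (hrec : ∀ k, 1 ≤ k → h (k + 1) - p * h k = ∑ j ∈ Finset.range J,
      s j * seqMax (fun q => h q ^ η j) (max 1 (k - M)) k)
    {k : ℕ} (hk : 1 ≤ k) :
    h (k + 1) / h k ≤ p + ∑ j ∈ Finset.range J, s j / (p ^ M) ^ η j * h k ^ (η j - 1) := by
  have hnonneg : ∀ k, 1 ≤ k → 0 ≤ h k := fun k hk => (hpos k hk).le
  have hstep := mul_le_succ_of_rec hnonneg hs hrec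
  have hx := hpos k hk
  have hinc : h (k + 1) - p * h k
      ≤ (∑ j ∈ Finset.range J, s j / (p ^ M) ^ η j * h k ^ (η j - 1)) * h k := by
    rw [hrec k hk, Finset.sum_mul]
    refine Finset.sum_le_sum fun j hj => ?_
    have hj := Finset.mem_range.1 hj
    calc s j * seqMax (fun q => h q ^ η j) (max 1 (k - M)) k
        ≤ s j * (h k / p ^ M) ^ η j :=
          mul_le_mul_of_nonneg_left
            (seqMax_rpow_le hp hp1 hnonneg hstep (hη j hj) M hk) (hs j hj)
      _ = s j / (p ^ M) ^ η j * h k ^ (η j - 1) * h k := by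
          rw [Real.div_rpow hx.le (pow_pos hp M).le, Real.rpow_sub_one hx.ne']
          field_simp
  rw [div_le_iff₀ hx]
  linarith

end Recursion

theorem stmt_8_general (hbar : ℕ → ℝ) (p δ b : ℝ) (J M : ℕ) (s η : ℕ → ℝ)
    (hpos : ∀ k, 1 ≤ k → 0 < hbar k)
    (hp : 0 < p) (hp1 : p < 1)
    (hs : ∀ j, j < J → 0 ≤ s j) (hη : ∀ j, j < J → 1 < η j)
    (hM : 1 ≤ M)
    (hδ : 0 < δ) (hδ1 : δ < 1)
    (hrec : ∀ k, 1 ≤ k →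
      hbar (k + 1) - p * hbar k = ∑ j ∈ Finset.range J,
        s j * seqMax (fun q => hbar q ^ η j) (max 1 (k - M)) k)
    (hbound : ∀ k, 1 ≤ k → hbar (k + 1) ≤ δ ^ ((k + M - 1) / M) * (b * hbar 1)) :
    Tendsto (fun k => hbar (k + 1) / hbar k) atTop (nhds p) := by
  have hnonneg : ∀ k, 1 ≤ k → 0 ≤ hbar k := fun k hk => (hpos k hk).le
  have hzero : Tendsto hbar atTop (𝓝 0) :=
    tendsto_zero_of_le_pow_div hM hδ.le hδ1 hnonneg hbound
  have hupper : Tendsto (fun k => p + ∑ j ∈ Finset.range J,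
      s j / (p ^ M) ^ η j * hbar k ^ (η j - 1)) atTop (𝓝 p) := by
    simpa using (tendsto_sum_mul_rpow_nhds_zero hzero _ _ _
      fun j hj => sub_pos.2 (hη j (Finset.mem_range.1 hj))).const_add p
  refine tendsto_of_tendsto_of_tendsto_of_le_of_le' tendsto_const_nhds hupper ?_ ?_ <;>
    filter_upwards [eventually_ge_atTop 1] with k hk
  · exact (le_div_iff₀ (hpos k hk)).2 (mul_le_succ_of_rec hnonneg hs hrec k hk)
  · exact div_le_add_sum_of_rec hp hp1.le hpos hs 
      (fun j hj => zero_le_one.trans (hη j hj).le) hrec hk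

/-- Asymptotic rate `p` for the A-CIAG upper bound sequence (Proposition 6 (iii)). -/
theorem stmt_8 (hbar : ℕ → ℝ) (p δ b : ℝ) (J M : ℕ) (s η : ℕ → ℝ)
    (hpos : ∀ k, 1 ≤ k → 0 < hbar k)
    (hp : 0 < p) (hp1 : p < 1)
    (hs : ∀ j, j < J → 0 ≤ s j) (hη : ∀ j, j < J → 1 < η j)
    (hJ : 1 ≤ J) (hM : 1 ≤ M)
    (hδ : 0 < δ) (hδ1 : δ < 1) (hb : 1 ≤ b)
    (hrec : ∀ k, 1 ≤ k →
      hbar (k + 1) - p * hbar k = ∑ j ∈ Finset.range J,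
        s j * seqMax (fun q => hbar q ^ η j) (max 1 (k - M)) k)
    (hbound : ∀ k, 1 ≤ k → hbar (k + 1) ≤ δ ^ ((k + M - 1) / M) * (b * hbar 1)) :
    Tendsto (fun k => hbar (k + 1) / hbar k) atTop (nhds p) :=
  stmt_8_general hbar p δ b J M s η hpos hp hp1 hs hη hM hδ hδ1 hrec hbound
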